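/- Let K > 2, l ≥ 2, and let (ω_x)_{x∈𝒩} be independent identically distributed real random variables whose common law μ is absolutely continuous with respect to Lebesgue measure. Then almost surely σ(Δ_{l−1}) + supp(μ) is contained in the pure point spectrum of H^ω_𝒯 (the closure of its set of eigenvalues), and almost surely every eigenvalue of the form E + ω_x with E ∈ σ(Δ_{l−1}) and x ∈ 𝒱_l has multiplicity at least K − 1. -/

import Mathlib

/-!
Canopy tree setup.  The canopy tree `𝒯` of degree `K+1` has vertex set
`𝒱 = ℤ × ℕ` and edges `{(x,n), (⌊x/K⌋, n+1)}`.  `canPar` is the parent map,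
`canParIter k` its `k`-th iterate, `canBelow K v w` is the relation `v ≺ w`
(`v` lies on the shortest path from `w` to the boundary `∂𝒯 = ℤ × {0}`),
and `canLam K l w = Λ_l(w)`.
-/

/-- Vertex set of the canopy tree. -/
abbrev CanV : Type := ℤ × ℕ

/-- Parent map of the canopy tree of degree `K+1`: `(x,n) ↦ (⌊x/K⌋, n+1)`. -/
def canPar (K : ℕ) (v : CanV) : CanV := (Int.fdiv v.1 K, v.2 + 1)

/-- `k`-th iterate of the parent map. -/
def canParIter (K k : ℕ) (v : CanV) : CanV := (canPar K)^[k] v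

/-- `v ≺ w`: `v` lies on the shortest path from `w` to the boundary. -/
def canBelow (K : ℕ) (v w : CanV) : Prop := v.2 ≤ w.2 ∧ canParIter K (w.2 - v.2) v = w

/-- `Λ_l(w) = {v : v ≺ w, d(v,w) ≤ l}`. -/
def canLam (K l : ℕ) (w : CanV) : Set CanV := {v | canBelow K v w ∧ w.2 - v.2 ≤ l}

/-- The adjacency operator `Δ_𝒯` on functions on the canopy tree:
`(Δ u)(v) = Σ_{d(v,w)=1} u(w)`, i.e. the value at the parent of `v` plus the sum of
the values at the `K` children of `v` (there are no children on the boundary level). -/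
noncomputable def canAdjOp (K : ℕ) (u : CanV → ℂ) (v : CanV) : ℂ :=
  u (canPar K v) +
    if v.2 = 0 then 0 else ∑ r ∈ Finset.range K, u ((K : ℤ) * v.1 + (r : ℤ), v.2 - 1)

/-- The unique vertex `x ∈ 𝒩 = ∪_m 𝒱_{m(l+1)+l}` with `v ∈ Λ_l(x)`. -/
def canPot (K l : ℕ) (v : CanV) : CanV := canParIter K (l - v.2 % (l + 1)) v

/-- The random operator `H^ω_𝒯 = Δ_𝒯 + Σ_{x∈𝒩} ω_x P_{Λ_l(x)}`; since the sets
`Λ_l(x)`, `x ∈ 𝒩`, partition `𝒱`, the potential at `v` is `ω` evaluated at the unique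
`x ∈ 𝒩` with `v ∈ Λ_l(x)`. -/
noncomputable def canH (K l : ℕ) (ω : CanV → ℝ) (u : CanV → ℂ) (v : CanV) : ℂ :=
  canAdjOp K u v + (ω (canPot K l v) : ℂ) * u v

/-- `σ(Δ_{l-1})`: the set of (real) eigenvalues of the adjacency matrix of the finite tree
`Λ_{l-1}(x₀)` for `x₀ ∈ 𝒱_{l-1}` (all such trees are isomorphic, so we take
`x₀ = (0, l-1)`): those `E` admitting a nonzero eigenfunction supported in `Λ_{l-1}(x₀)`. -/
def canLamSpec (K l : ℕ) : Set ℝ :=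
  {E : ℝ | ∃ ψ : CanV → ℂ, ψ ≠ 0 ∧ (∀ v ∉ canLam K (l - 1) ((0 : ℤ), l - 1), ψ v = 0) ∧
    ∀ v ∈ canLam K (l - 1) ((0 : ℤ), l - 1), canAdjOp K ψ v = (E : ℂ) * ψ v}

open MeasureTheory ProbabilityTheory

/-- The topological support of a Borel measure on `ℝ`. -/
def measSupport (μ : Measure ℝ) : Set ℝ :=
  {x : ℝ | ∀ U : Set ℝ, IsOpen U → x ∈ U → 0 < μ U}

/-- The set `𝒩 = ∪_{m≥0} 𝒱_{m(l+1)+l}` of centres of the perturbation blocks. -/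
def canN (l : ℕ) : Set CanV := {x : CanV | x.2 % (l + 1) = l % (l + 1)}

/-!
Let `ψ` be an eigenfunction of `Δ_{l-1}` with eigenvalue `E`, and place a copy `ψ_r` of it on
each of the `K` subtrees `Λ_{l-1}(y)` hanging from the children `y` of a vertex `x ∈ 𝒱_l`. Each
copy satisfies `Δ_𝒯 ψ_r = E ψ_r` except at `x`, where it picks up `ψ(root)`; so for `∑ c_r = 0`
the combination `∑ c_r ψ_r` is an eigenfunction of `Δ_𝒯`, supported in `Λ_l(x)`, where the
potential is the constant `ω_x`: it is an eigenfunction of `H^ω_𝒯` with eigenvalue `E + ω_x`.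
The copies have disjoint supports, so an orthonormal basis of the `(K - 1)`-dimensional space
`{c : ∑ c_r = 0}` yields `K - 1` orthonormal eigenfunctions.

The `ω_x`, `x ∈ 𝒱_l`, are infinitely many independent samples of `μ`, so almost surely every
open set of positive `μ`-measure contains one of them; hence `supp μ` lies in the closure of
`{ω_x : x ∈ 𝒱_l}` and `E + supp μ` in the closure of the set of eigenvalues.
-/

section Tree

variable {K : ℕ} {v w : CanV}

lemma canParIter_succ (K k : ℕ) (v : CanV) :
    canParIter K (k + 1) v = canParIter K k (canPar K v) :=
  Function.iterate_succ_apply _ _ _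

lemma canParIter_succ' (K k : ℕ) (v : CanV) :
    canParIter K (k + 1) v = canPar K (canParIter K k v) :=
  Function.iterate_succ_apply' _ _ _

@[simp]
lemma canPar_snd (K : ℕ) (v : CanV) : (canPar K v).2 = v.2 + 1 := rfl

@[simp]
lemma canParIter_snd (K k : ℕ) (v : CanV) : (canParIter K k v).2 = v.2 + k := by
  induction k with
  | zero => rfl
  | succ k ih => rw [canParIter_succ', canPar_snd, ih, add_assoc]

lemma canParIter_fst (K k : ℕ) (v : CanV) : (canParIter K k v).1 = v.1 / (K : ℤ) ^ k := by
  induction k with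
  | zero => simp [canParIter]
  | succ k ih =>
    rw [canParIter_succ', canPar, Int.fdiv_eq_ediv_of_nonneg _ (Int.natCast_nonneg K), ih,
      Int.ediv_ediv_of_nonneg (by positivity), pow_succ]

lemma canBelow_iff : canBelow K v w ↔ v.2 ≤ w.2 ∧ v.1 / (K : ℤ) ^ (w.2 - v.2) = w.1 := by
  simp only [canBelow, Prod.ext_iff, canParIter_fst, canParIter_snd]
  constructor
  · rintro ⟨h, h1, -⟩
    exact ⟨h, h1⟩
  · rintro ⟨h, h1⟩
    exact ⟨h, h1, by omega⟩

lemma canBelow_iff_fst_mem_Ico (hK : 0 < K) :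
    canBelow K v w ↔ v.2 ≤ w.2 ∧
      w.1 * (K : ℤ) ^ (w.2 - v.2) ≤ v.1 ∧ v.1 < (w.1 + 1) * (K : ℤ) ^ (w.2 - v.2) := by
  rw [canBelow_iff, Int.ediv_eq_iff_of_pos (by positivity), add_one_mul]

lemma mem_canLam_snd_iff : v ∈ canLam K w.2 w ↔ canBelow K v w :=
  ⟨And.left, fun h => ⟨h, Nat.sub_le _ _⟩⟩

lemma canBelow.snd_le (h : canBelow K v w) : v.2 ≤ w.2 := h.1

lemma canBelow.eq_of_snd_eq {w' : CanV} (h : canBelow K v w) (h' : canBelow K v w')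
    (hw : w.2 = w'.2) : w = w' := by
  rw [← h.2, ← h'.2, hw]

lemma canBelow_of_canPar (h : canBelow K (canPar K v) w) : canBelow K v w := by
  obtain ⟨hle, hw⟩ := h
  refine ⟨by simp at hle; omega, ?_⟩
  rw [canPar_snd] at hle hw
  rwa [show w.2 - v.2 = w.2 - (v.2 + 1) + 1 by omega, canParIter_succ]

lemma canBelow.canPar_of_ne (h : canBelow K v w) (hne : v ≠ w) : canBelow K (canPar K v) w := by
  obtain ⟨hle, hw⟩ := h
  have hlt : v.2 < w.2 := by
    refine hle.lt_of_ne fun heq => hne ?_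
    rwa [heq, Nat.sub_self] at hw
  refine ⟨by simp; omega, ?_⟩
  rwa [show w.2 - v.2 = w.2 - (v.2 + 1) + 1 by omega, canParIter_succ] at hw

lemma canPar_child {r : ℕ} (hr : r < K) (y : ℤ) (j : ℕ) :
    canPar K ((K : ℤ) * y + r, j) = (y, j + 1) := by
  have hK : (0 : ℤ) < K := by omega
  simp only [canPar, Int.fdiv_eq_ediv_of_nonneg _ hK.le, Prod.mk.injEq, and_true]
  rw [add_comm, Int.add_mul_ediv_left _ _ hK.ne', Int.ediv_eq_zero_of_lt (by positivity)
    (by exact_mod_cast hr), zero_add]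

lemma exists_child_eq (hK : 0 < K) (w : CanV) :
    ∃ r < K, ((K : ℤ) * (canPar K w).1 + r, (canPar K w).2 - 1) = w := by
  have hKz : (0 : ℤ) < K := by exact_mod_cast hK
  refine ⟨(w.1 % K).toNat, by have := Int.emod_lt_of_pos w.1 hKz; omega, ?_⟩
  simp only [canPar, Int.fdiv_eq_ediv_of_nonneg _ hKz.le, Int.toNat_of_nonneg
    (Int.emod_nonneg _ hKz.ne'), Int.mul_ediv_add_emod, Nat.add_sub_cancel]

lemma finite_setOf_canBelow (hK : 0 < K) (w : CanV) : {v | canBelow K v w}.Finite := by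
  refine ((Set.finite_Iic w.2).biUnion fun j _ =>
    (Set.finite_Ico (w.1 * (K : ℤ) ^ (w.2 - j)) ((w.1 + 1) * (K : ℤ) ^ (w.2 - j))).prod
      (Set.finite_singleton j)).subset ?_
  rintro ⟨x, j⟩ hv
  rw [Set.mem_ofPred_eq, canBelow_iff_fst_mem_Ico hK] at hv
  simp only [Set.mem_iUnion, Set.mem_prod, Set.mem_Ico, Set.mem_singleton_iff]
  exact ⟨j, hv.1, hv.2, rfl⟩

lemma canPot_eq_canPar {l : ℕ} (h : canBelow K v w) (hl : l = w.2 + 1) :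
    canPot K l v = canPar K w := by
  have hv : v.2 % (l + 1) = v.2 := Nat.mod_eq_of_lt (by have := h.snd_le; omega)
  rw [canPot, hv, show l - v.2 = w.2 - v.2 + 1 by have := h.snd_le; omega, canParIter_succ', h.2]

end Tree

section Adjacency

variable {K n : ℕ} {v w : CanV}

noncomputable def canAdj (K : ℕ) : (CanV → ℂ) →ₗ[ℂ] CanV → ℂ where
  toFun := canAdjOp K
  map_add' f g := by
    ext v
    simp only [canAdjOp, Pi.add_apply, Finset.sum_add_distrib]
    split_ifs <;> ring
  map_smul' c f := by
    ext v
    simp only [canAdjOp, Pi.smul_apply, smul_eq_mul, RingHom.id_apply, mul_add, mul_ite,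
      mul_zero, Finset.mul_sum]

@[simp]
lemma canAdj_apply (f : CanV → ℂ) : canAdj K f = canAdjOp K f := rfl

/-- Carries the subtree below `(b, n)` onto the one below `(0, n)`; it respects the tree
structure only at levels `≤ n`. -/
def canShift (K n : ℕ) (b : ℤ) : CanV ≃ CanV where
  toFun v := (v.1 - b * (K : ℤ) ^ (n - v.2), v.2)
  invFun v := (v.1 + b * (K : ℤ) ^ (n - v.2), v.2)
  left_inv v := by simp
  right_inv v := by simp

lemma canShift_apply (b : ℤ) (v : CanV) :
    canShift K n b v = (v.1 - b * (K : ℤ) ^ (n - v.2), v.2) := rfl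

@[simp]
lemma canShift_snd (b : ℤ) (v : CanV) : (canShift K n b v).2 = v.2 := rfl

lemma canBelow_canShift_iff (hK : 0 < K) (b : ℤ) :
    canBelow K (canShift K n b v) (0, n) ↔ canBelow K v (b, n) := by
  simp only [canBelow_iff_fst_mem_Ico hK, canShift_apply]
  constructor <;> rintro ⟨h, h1, h2⟩ <;> exact ⟨h, by linarith, by linarith⟩

lemma canShift_canPar (hK : 0 < K) (b : ℤ) (hv : v.2 < n) :
    canShift K n b (canPar K v) = canPar K (canShift K n b v) := by
  have hKz : (0 : ℤ) < K := by exact_mod_cast hK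
  simp only [canShift_apply, canPar, Int.fdiv_eq_ediv_of_nonneg _ hKz.le, Prod.mk.injEq, and_true]
  rw [show n - v.2 = n - (v.2 + 1) + 1 by omega, pow_succ,
    show v.1 - b * ((K : ℤ) ^ (n - (v.2 + 1)) * K) = v.1 + -(b * (K : ℤ) ^ (n - (v.2 + 1))) * K
      by ring, Int.add_mul_ediv_right _ _ hKz.ne', sub_eq_add_neg]

lemma canShift_child (b : ℤ) (hv : v.2 ≤ n) (hv0 : v.2 ≠ 0) (r : ℤ) :
    canShift K n b ((K : ℤ) * v.1 + r, v.2 - 1) =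
      ((K : ℤ) * (canShift K n b v).1 + r, v.2 - 1) := by
  simp only [canShift_apply, Prod.mk.injEq, and_true]
  rw [show n - (v.2 - 1) = n - v.2 + 1 by omega, pow_succ]
  ring

lemma canAdjOp_comp_canShift (hK : 0 < K) {ψ : CanV → ℂ} (hψ : ∀ v : CanV, v.2 = n + 1 → ψ v = 0)
    (b : ℤ) (hv : v.2 ≤ n) :
    canAdjOp K (ψ ∘ canShift K n b) v = canAdjOp K ψ (canShift K n b v) := by
  simp only [canAdjOp, Function.comp_apply, canShift_snd]
  congr 1
  · rcases hv.lt_or_eq with hv | hv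
    · rw [canShift_canPar hK b hv]
    · rw [hψ _ (by simp [canShift_apply, hv]), hψ _ (by simp [canShift_apply, hv])]
  · by_cases h0 : v.2 = 0
    · simp only [h0, if_true]
    · simp only [h0, if_false]
      exact Finset.sum_congr rfl fun r _ => by rw [canShift_child b hv h0]

/-- `φ` is an eigenfunction, with eigenvalue `E`, of the adjacency matrix of the finite tree
`Λ_{w.2}(w)`, extended by zero to the whole canopy tree. -/
def IsSubtreeEigenfunction (K : ℕ) (w : CanV) (E : ℝ) (φ : CanV → ℂ) : Prop :=
  (∀ v, ¬ canBelow K v w → φ v = 0) ∧ ∀ v, canBelow K v w → canAdjOp K φ v = E * φ v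

lemma mem_canLamSpec_iff {l : ℕ} {E : ℝ} :
    E ∈ canLamSpec K l ↔ ∃ ψ ≠ 0, IsSubtreeEigenfunction K (0, l - 1) E ψ := by
  have hmem : ∀ v, v ∈ canLam K (l - 1) (0, l - 1) ↔ canBelow K v (0, l - 1) :=
    fun _ => mem_canLam_snd_iff
  simp only [canLamSpec, IsSubtreeEigenfunction, Set.mem_ofPred_eq, hmem]

namespace IsSubtreeEigenfunction

variable {E : ℝ} {φ : CanV → ℂ}

lemma smul (h : IsSubtreeEigenfunction K w E φ) (c : ℂ) :
    IsSubtreeEigenfunction K w E (c • φ) := by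
  refine ⟨fun v hv => by simp [h.1 v hv], fun v hv => ?_⟩
  rw [← canAdj_apply, map_smul, Pi.smul_apply, canAdj_apply, h.2 v hv]
  simp only [Pi.smul_apply, smul_eq_mul]
  ring

lemma comp_canShift (hK : 0 < K) (h : IsSubtreeEigenfunction K (0, n) E φ) (b : ℤ) :
    IsSubtreeEigenfunction K (b, n) E (φ ∘ canShift K n b) := by
  refine ⟨fun v hv => h.1 _ ((canBelow_canShift_iff hK b).not.2 hv), fun v hv => ?_⟩
  have hφ : ∀ v : CanV, v.2 = n + 1 → φ v = 0 := fun v hv =>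
    h.1 v fun hb => by have := hb.snd_le; simp at this; omega
  rw [canAdjOp_comp_canShift hK hφ b hv.snd_le, h.2 _ ((canBelow_canShift_iff hK b).2 hv),
    Function.comp_apply]

/-- Off the subtree, the only vertex adjacent to it is the parent of the root. -/
lemma canAdjOp_eq (hK : 0 < K) (h : IsSubtreeEigenfunction K w E φ) (v : CanV) :
    canAdjOp K φ v = E * φ v + if v = canPar K w then φ w else 0 := by
  by_cases hv : canBelow K v w
  · have hne : v ≠ canPar K w := fun hpar => by
      have := hv.snd_le
      simp [hpar] at this
    rw [h.2 v hv, if_neg hne, add_zero]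
  rw [h.1 v hv, mul_zero, zero_add, canAdjOp,
    h.1 _ fun hp => hv (canBelow_of_canPar hp), zero_add]
  by_cases h0 : v.2 = 0
  · have hne : v ≠ canPar K w := fun hpar => by simp [hpar] at h0
    rw [if_pos h0, if_neg hne]
  rw [if_neg h0]
  have hchild : ∀ r < K, ((K : ℤ) * v.1 + r, v.2 - 1) ≠ w →
      φ ((K : ℤ) * v.1 + r, v.2 - 1) = 0 := fun r hr hne => h.1 _ fun hb => hv <| by
    simpa [canPar_child hr, Nat.sub_add_cancel (Nat.pos_of_ne_zero h0)] using
      hb.canPar_of_ne hne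
  split_ifs with hpar
  · obtain ⟨r₀, hr₀, hw⟩ := exists_child_eq hK w
    rw [← hpar] at hw
    rw [Finset.sum_eq_single_of_mem r₀ (Finset.mem_range.2 hr₀), hw]
    refine fun r hr hne => hchild r (Finset.mem_range.1 hr) fun heq => hne ?_
    have := congrArg Prod.fst (heq.trans hw.symm)
    simp only [add_right_inj, Nat.cast_inj] at this
    exact this
  · refine Finset.sum_eq_zero fun r hr => hchild r (Finset.mem_range.1 hr) fun heq => hpar ?_
    rw [← heq, canPar_child (Finset.mem_range.1 hr), Nat.sub_add_cancel (Nat.pos_of_ne_zero h0)]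

end IsSubtreeEigenfunction

end Adjacency

section Hilbert

variable {α ι : Type*}

lemma lp.orthonormal_iff [DecidableEq ι] {Ψ : ι → lp (fun _ : α => ℂ) 2} :
    Orthonormal ℂ Ψ ↔ ∀ i j, ∑' v, starRingEnd ℂ (Ψ i v) * Ψ j v = if i = j then 1 else 0 := by
  simp only [orthonormal_iff_ite, lp.inner_eq_tsum, RCLike.inner_apply']

lemma lp.orthonormal_of_disjoint {φ : ι → lp (fun _ : α => ℂ) 2} (hnorm : ∀ i, ‖φ i‖ = 1)
    (hdisj : ∀ i j, i ≠ j → ∀ v, φ i v = 0 ∨ φ j v = 0) : Orthonormal ℂ φ := by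
  refine ⟨hnorm, fun i j hij => ?_⟩
  change inner ℂ (φ i) (φ j) = 0
  rw [lp.inner_eq_tsum]
  refine (tsum_congr fun v => ?_).trans tsum_zero
  rcases hdisj i j hij v with h | h <;> simp [h]

lemma lp.norm_eq_of_eq_comp_equiv {E : Type*} [NormedAddCommGroup E] {p : ENNReal}
    (hp : 0 < p.toReal) {f g : lp (fun _ : α => E) p} (e : α ≃ α) (h : ⇑g = f ∘ e) :
    ‖g‖ = ‖f‖ := by
  rw [lp.norm_eq_tsum_rpow hp, lp.norm_eq_tsum_rpow hp, h]
  exact congrArg (· ^ _) (e.tsum_eq fun v => ‖f v‖ ^ p.toReal)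

lemma Orthonormal.sum_smul {𝕜 E κ : Type*} [RCLike 𝕜] [NormedAddCommGroup E]
    [InnerProductSpace 𝕜 E] [Fintype ι] {φ : ι → E} (hφ : Orthonormal 𝕜 φ)
    {c : κ → EuclideanSpace 𝕜 ι} (hc : Orthonormal 𝕜 c) :
    Orthonormal 𝕜 fun i => ∑ r, c i r • φ r := by
  classical
  rw [orthonormal_iff_ite] at hc ⊢
  intro i j
  rw [hφ.inner_sum, ← hc i j, PiLp.inner_apply]
  simp only [RCLike.inner_apply']

lemma exists_orthonormal_sum_eq_zero {K : ℕ} (hK : 0 < K) :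
    ∃ c : Fin (K - 1) → EuclideanSpace ℂ (Fin K), Orthonormal ℂ c ∧ ∀ i, ∑ r, c i r = 0 := by
  set one : EuclideanSpace ℂ (Fin K) := WithLp.toLp 2 fun _ => 1
  have hone : one ≠ 0 := fun h => by
    simpa [one] using congrArg (· ⟨0, hK⟩) h
  have : Fact (Module.finrank ℂ (EuclideanSpace ℂ (Fin K)) = (K - 1) + 1) :=
    ⟨by rw [finrank_euclideanSpace_fin]; omega⟩
  let b := (stdOrthonormalBasis ℂ (ℂ ∙ one)ᗮ).reindex
    (finCongr (Submodule.finrank_orthogonal_span_singleton (n := K - 1) hone))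
  refine ⟨fun i => b i, b.orthonormal.comp_linearIsometry (ℂ ∙ one)ᗮ.subtypeₗᵢ, fun i => ?_⟩
  have := Submodule.mem_orthogonal_singleton_iff_inner_right.1 (b i).2
  simpa [one, PiLp.inner_apply] using this

end Hilbert

section Construction

variable {K n : ℕ} {E : ℝ}

lemma IsSubtreeEigenfunction.memℓp (hK : 0 < K) {w : CanV} {φ : CanV → ℂ}
    (h : IsSubtreeEigenfunction K w E φ) (p : ENNReal) : Memℓp φ p :=
  (memℓp_zero ((finite_setOf_canBelow hK w).subset fun v hv =>
    by_contra fun hb => hv (h.1 v hb))).of_exponent_ge bot_le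

lemma exists_norm_eq_one_subtreeEigenfunction (hK : 0 < K) {l : ℕ} (hE : E ∈ canLamSpec K l) :
    ∃ ψ : lp (fun _ : CanV => ℂ) 2, ‖ψ‖ = 1 ∧ IsSubtreeEigenfunction K (0, l - 1) E ψ := by
  obtain ⟨ψ, hne, hψ⟩ := mem_canLamSpec_iff.1 hE
  let ψ' : lp (fun _ : CanV => ℂ) 2 := ⟨ψ, hψ.memℓp hK 2⟩
  have hψ' : ψ' ≠ 0 := fun h => hne (congrArg (⇑) h)
  refine ⟨(‖ψ'‖⁻¹ : ℂ) • ψ', norm_smul_inv_norm hψ', ?_⟩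
  rw [lp.coeFn_smul]
  exact hψ.smul _

/-- `ψ`, given below `(0, n)`, moved below the `r`-th child `(K a + r, n)` of `(a, n + 1)`. -/
def childCopy (K n : ℕ) (a : ℤ) (ψ : CanV → ℂ) (r : Fin K) : CanV → ℂ :=
  ψ ∘ canShift K n (K * a + r)

variable {a : ℤ} {ψ : CanV → ℂ}

lemma IsSubtreeEigenfunction.childCopy (hK : 0 < K) (hψ : IsSubtreeEigenfunction K (0, n) E ψ)
    (r : Fin K) : IsSubtreeEigenfunction K (K * a + r, n) E (childCopy K n a ψ r) :=
  hψ.comp_canShift hK _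

lemma canAdjOp_sum_childCopy (hK : 0 < K) (hψ : IsSubtreeEigenfunction K (0, n) E ψ)
    {c : Fin K → ℂ} (hc : ∑ r, c r = 0) (v : CanV) :
    canAdjOp K (∑ r, c r • childCopy K n a ψ r) v = E * (∑ r, c r • childCopy K n a ψ r) v := by
  have hdefect : ∀ r : Fin K, canAdjOp K (childCopy K n a ψ r) v =
      E * childCopy K n a ψ r v + if v = (a, n + 1) then ψ (0, n) else 0 := fun r => by
    rw [(hψ.childCopy hK r).canAdjOp_eq hK, canPar_child r.2]
    simp [childCopy, canShift_apply]
  rw [← canAdj_apply, map_sum]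
  simp only [map_smul, Finset.sum_apply, Pi.smul_apply, smul_eq_mul, canAdj_apply, hdefect,
    mul_add, Finset.sum_add_distrib, ← Finset.sum_mul, hc, zero_mul, add_zero, Finset.mul_sum]
  exact Finset.sum_congr rfl fun r _ => by ring

lemma canH_sum_childCopy (hK : 0 < K) (hψ : IsSubtreeEigenfunction K (0, n) E ψ)
    {c : Fin K → ℂ} (hc : ∑ r, c r = 0) {l : ℕ} (hl : l = n + 1) (W : CanV → ℝ) (v : CanV) :
    canH K l W (∑ r, c r • childCopy K n a ψ r) v =
      ((E + W (a, l) : ℝ) : ℂ) * (∑ r, c r • childCopy K n a ψ r) v := by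
  rw [canH, canAdjOp_sum_childCopy hK hψ hc]
  by_cases hv : (∑ r, c r • childCopy K n a ψ r) v = 0
  · simp [hv]
  rw [Finset.sum_apply] at hv
  obtain ⟨r, -, hr⟩ := Finset.exists_ne_zero_of_sum_ne_zero hv
  have hb : canBelow K v (K * a + r, n) :=
    by_contra fun hb => hr (by simp [(hψ.childCopy hK r).1 v hb])
  rw [canPot_eq_canPar hb hl, canPar_child r.2, ← hl, Finset.sum_apply]
  push_cast
  ring

lemma orthonormal_childCopy (hK : 0 < K) {ψ : lp (fun _ : CanV => ℂ) 2}
    (hψ : IsSubtreeEigenfunction K (0, n) E ψ) (hψ1 : ‖ψ‖ = 1) (a : ℤ)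
    {φ : Fin K → lp (fun _ : CanV => ℂ) 2} (hφ : ∀ r, ⇑(φ r) = childCopy K n a ψ r) :
    Orthonormal ℂ φ := by
  refine lp.orthonormal_of_disjoint
    (fun r => (lp.norm_eq_of_eq_comp_equiv (by norm_num) _ (hφ r)).trans hψ1)
    fun r s hrs v => ?_
  by_contra! h
  rw [hφ, hφ] at h
  have hr := by_contra fun hb => h.1 ((hψ.childCopy hK r).1 v hb)
  have hs := by_contra fun hb => h.2 ((hψ.childCopy hK s).1 v hb)
  have := congrArg Prod.fst (hr.eq_of_snd_eq hs rfl)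
  simp only [add_right_inj, Nat.cast_inj] at this
  exact hrs (Fin.ext this)

lemma exists_orthonormal_canH_eigenvectors (hK : 0 < K) {l : ℕ} (hl : 1 ≤ l)
    (hE : E ∈ canLamSpec K l) {x : CanV} (hx : x.2 = l) (W : CanV → ℝ) :
    ∃ Ψ : Fin (K - 1) → lp (fun _ : CanV => ℂ) 2, Orthonormal ℂ Ψ ∧
      ∀ i v, canH K l W (Ψ i) v = ((E + W x : ℝ) : ℂ) * Ψ i v := by
  obtain ⟨a, j⟩ := x
  obtain rfl : j = l := hx
  obtain ⟨ψ, hψ1, hψ⟩ := exists_norm_eq_one_subtreeEigenfunction hK hE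
  obtain ⟨c, hc, hcsum⟩ := exists_orthonormal_sum_eq_zero hK
  let φ : Fin K → lp (fun _ : CanV => ℂ) 2 :=
    fun r => ⟨childCopy K (j - 1) a ψ r, (hψ.childCopy hK r).memℓp hK 2⟩
  refine ⟨fun i => ∑ r, c i r • φ r,
    (orthonormal_childCopy hK hψ hψ1 a fun _ => rfl).sum_smul hc, fun i v => ?_⟩
  simp only [lp.coeFn_sum, lp.coeFn_smul]
  exact canH_sum_childCopy hK hψ (hcsum i) (by omega) W v

end Construction

section Probability

variable {Ω ι : Type*} [MeasurableSpace Ω] {P : Measure Ω} [Infinite ι]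

lemma ae_exists_mem_of_iIndepFun {α : Type*} [MeasurableSpace α] {μ : Measure α}
    [IsProbabilityMeasure μ] {X : ι → Ω → α} (hX : ∀ i, Measurable (X i))
    (hlaw : ∀ i, P.map (X i) = μ) (hindep : iIndepFun X P) {U : Set α} (hU : MeasurableSet U)
    (hμU : μ U ≠ 0) :
    ∀ᵐ ρ ∂P, ∃ i, X i ρ ∈ U := by
  have hmiss : ∀ N : ℕ, P {ρ | ∀ i, X i ρ ∉ U} ≤ μ Uᶜ ^ N := fun N => by
    obtain ⟨s, rfl⟩ := Infinite.exists_subset_card_eq ι N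
    calc P {ρ | ∀ i, X i ρ ∉ U}
        ≤ P (⋂ i ∈ s, X i ⁻¹' Uᶜ) := measure_mono fun ρ hρ => by simpa using fun i _ => hρ i
      _ = ∏ i ∈ s, P (X i ⁻¹' Uᶜ) := hindep.measure_inter_preimage_eq_mul s fun _ _ => hU.compl
      _ = μ Uᶜ ^ s.card := by
        rw [← Finset.prod_const]
        exact Finset.prod_congr rfl fun i _ => by rw [← hlaw i, Measure.map_apply (hX i) hU.compl]
  have hlt : μ Uᶜ < 1 := by
    rw [prob_compl_eq_one_sub hU]
    exact ENNReal.sub_lt_self ENNReal.one_ne_top one_ne_zero hμU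
  rw [ae_iff]
  simp only [not_exists]
  exact le_antisymm (ge_of_tendsto' (ENNReal.tendsto_pow_atTop_nhds_zero_of_lt_one hlt) hmiss)
    bot_le

lemma ae_measSupport_subset_closure_range {μ : Measure ℝ} [IsProbabilityMeasure μ]
    {X : ι → Ω → ℝ} (hX : ∀ i, Measurable (X i)) (hlaw : ∀ i, P.map (X i) = μ)
    (hindep : iIndepFun X P) :
    ∀ᵐ ρ ∂P, measSupport μ ⊆ closure (Set.range fun i => X i ρ) := by
  obtain ⟨B, hBc, -, hB⟩ := TopologicalSpace.exists_countable_basis ℝ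
  have hhit : ∀ᵐ ρ ∂P, ∀ U ∈ B, μ U ≠ 0 → ∃ i, X i ρ ∈ U := by
    rw [ae_ball_iff hBc]
    intro U hU
    by_cases hμU : μ U = 0
    · exact ae_of_all _ fun _ h => (h hμU).elim
    filter_upwards [ae_exists_mem_of_iIndepFun hX hlaw hindep (hB.isOpen hU).measurableSet hμU]
      with ρ hρ using fun _ => hρ
  filter_upwards [hhit] with ρ hρ t ht
  refine hB.mem_closure_iff.2 fun U hU htU => ?_
  obtain ⟨i, hi⟩ := hρ U hU (ht U (hB.isOpen hU) htU).ne'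
  exact ⟨X i ρ, hi, i, rfl⟩

end Probability

theorem canopy_pp_spectrum_multiplicity_general
    (K l : ℕ) (hK : 2 < K) (hl : 2 ≤ l)
    {Ω : Type*} [MeasurableSpace Ω] (P : Measure Ω)
    (μ : Measure ℝ) [IsProbabilityMeasure μ]
    (ω : CanV → Ω → ℝ)
    (hmeas : ∀ x, Measurable (ω x))
    (hlaw : ∀ x ∈ canN l, Measure.map (ω x) P = μ)
    (hindep : iIndepFun (fun x : canN l => ω x) P) :
    ∀ᵐ ρ ∂P,
      (∀ E ∈ canLamSpec K l, ∀ t ∈ measSupport μ,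
        E + t ∈ closure {s : ℝ | ∃ Ψ : CanV → ℂ, Ψ ≠ 0 ∧ Memℓp Ψ 2 ∧
          ∀ v, canH K l (fun y => ω y ρ) Ψ v = (s : ℂ) * Ψ v}) ∧
      (∀ E ∈ canLamSpec K l, ∀ x : CanV, x.2 = l →
        ∃ Ψ : Fin (K - 1) → CanV → ℂ,
          (∀ i, Memℓp (Ψ i) 2) ∧
          (∀ i v, canH K l (fun y => ω y ρ) (Ψ i) v = ((E + ω x ρ : ℝ) : ℂ) * Ψ i v) ∧
          (∀ i j, ∑' v : CanV, (starRingEnd ℂ) (Ψ i v) * Ψ j v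
            = if i = j then 1 else 0)) := by
  have hK0 : 0 < K := by omega
  have hrow : iIndepFun (fun m : ℤ => ω (m, l)) P := hindep.precomp
    (g := fun m : ℤ => ⟨(m, l), rfl⟩) fun _ _ h => congrArg (fun x : canN l => x.1.1) h
  filter_upwards [ae_measSupport_subset_closure_range (fun m => hmeas _)
    (fun m => hlaw (m, l) rfl) hrow] with ρ hρ
  have hmult := fun E (hE : E ∈ canLamSpec K l) (x : CanV) (hx : x.2 = l) =>
    exists_orthonormal_canH_eigenvectors hK0 (by omega) hE hx fun y => ω y ρ
  refine ⟨fun E hE t ht => ?_, fun E hE x hx => ?_⟩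
  · have heig : (E + ·) '' Set.range (fun m : ℤ => ω (m, l) ρ) ⊆ {s : ℝ | ∃ Ψ : CanV → ℂ,
        Ψ ≠ 0 ∧ Memℓp Ψ 2 ∧ ∀ v, canH K l (fun y => ω y ρ) Ψ v = (s : ℂ) * Ψ v} := by
      rintro _ ⟨_, ⟨m, rfl⟩, rfl⟩
      obtain ⟨Ψ, hΨ, heq⟩ := hmult E hE (m, l) rfl
      exact ⟨Ψ ⟨0, by omega⟩, fun h => hΨ.ne_zero _ (lp.ext h), (Ψ _).2, heq _⟩
    exact closure_mono heig (image_closure_subset_closure_image (continuous_const_add E)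
      ⟨t, hρ ht, rfl⟩)
  · obtain ⟨Ψ, hΨ, heq⟩ := hmult E hE x hx
    exact ⟨fun i => Ψ i, fun i => (Ψ i).2, heq, lp.orthonormal_iff.1 hΨ⟩

/-- Let `K > 2`, `l ≥ 2` and let `(ω_x)_{x∈𝒩}` be i.i.d. real random
variables whose common law `μ` is absolutely continuous (w.r.t. Lebesgue measure).  Then
almost surely `σ(Δ_{l-1}) + supp(μ)` is contained in the pure point spectrum of `H^ω_𝒯`
(the closure of its set of eigenvalues), and almost surely every eigenvalue of the form
`E + ω_x` with `E ∈ σ(Δ_{l-1})` and `x ∈ 𝒱_l` has multiplicity at least `K - 1`. -/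
theorem canopy_pp_spectrum_multiplicity
    (K l : ℕ) (hK : 2 < K) (hl : 2 ≤ l)
    {Ω : Type*} [MeasurableSpace Ω] (P : Measure Ω) [IsProbabilityMeasure P]
    (μ : Measure ℝ) [IsProbabilityMeasure μ]
    (hac : μ ≪ volume)
    (ω : CanV → Ω → ℝ)
    (hmeas : ∀ x, Measurable (ω x))
    (hlaw : ∀ x ∈ canN l, Measure.map (ω x) P = μ)
    (hindep : iIndepFun (fun x : canN l => ω x) P) :
    ∀ᵐ ρ ∂P,
      (∀ E ∈ canLamSpec K l, ∀ t ∈ measSupport μ,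
        E + t ∈ closure {s : ℝ | ∃ Ψ : CanV → ℂ, Ψ ≠ 0 ∧ Memℓp Ψ 2 ∧
          ∀ v, canH K l (fun y => ω y ρ) Ψ v = (s : ℂ) * Ψ v}) ∧
      (∀ E ∈ canLamSpec K l, ∀ x : CanV, x.2 = l →
        ∃ Ψ : Fin (K - 1) → CanV → ℂ,
          (∀ i, Memℓp (Ψ i) 2) ∧
          (∀ i v, canH K l (fun y => ω y ρ) (Ψ i) v = ((E + ω x ρ : ℝ) : ℂ) * Ψ i v) ∧
          (∀ i j, ∑' v : CanV, (starRingEnd ℂ) (Ψ i v) * Ψ j v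
            = if i = j then 1 else 0)) :=
  canopy_pp_spectrum_multiplicity_general K l hK hl P μ ω hmeas hlaw hindep
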